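/- For every p ≥ 1 and all x, y ∈ [0,1]^p with x + y ≠ 0, Δ_DML1(x,y) ≤ Δ_DML2(x,y). -/

import Mathlib

open Finset

/-- The L¹ norm of a vector. -/
noncomputable def l1 {p : ℕ} (z : Fin p → ℝ) : ℝ := ∑ i, |z i|

/-- The first Dice semimetric loss. -/
noncomputable def DML1 {p : ℕ} (x y : Fin p → ℝ) : ℝ :=
  1 - (l1 (x + y) - l1 (x - y)) / l1 (x + y)

/-- The second Dice semimetric loss. -/
noncomputable def DML2 {p : ℕ} (x y : Fin p → ℝ) : ℝ :=
  1 - 2 * l1 (x * y) / (2 * l1 (x * y) + l1 (x - y))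

/-!
Both losses have the form `‖x - y‖₁ / denominator`, and the denominator of `Δ_DML2` is the
smaller one: coordinatewise, `2ab + |a - b| ≤ a + b` for `a, b ∈ [0, 1]`, which is just
`ab ≤ min a b`.
-/

theorem l1_nonneg {p : ℕ} (z : Fin p → ℝ) : 0 ≤ l1 z :=
  sum_nonneg fun i _ => abs_nonneg (z i)

theorem two_mul_abs_mul_add_abs_sub_le_abs_add {a b : ℝ}
    (ha : a ∈ Set.Icc (0 : ℝ) 1) (hb : b ∈ Set.Icc (0 : ℝ) 1) :
    2 * |a * b| + |a - b| ≤ |a + b| := by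
  obtain ⟨ha₀, ha₁⟩ := ha
  obtain ⟨hb₀, hb₁⟩ := hb
  rw [abs_of_nonneg (mul_nonneg ha₀ hb₀), abs_of_nonneg (add_nonneg ha₀ hb₀)]
  rcases abs_cases (a - b) with ⟨h, _⟩ | ⟨h, _⟩ <;> rw [h] <;> nlinarith

theorem two_mul_l1_mul_add_l1_sub_le_l1_add {p : ℕ} {x y : Fin p → ℝ}
    (hx : ∀ i, x i ∈ Set.Icc (0 : ℝ) 1) (hy : ∀ i, y i ∈ Set.Icc (0 : ℝ) 1) :
    2 * l1 (x * y) + l1 (x - y) ≤ l1 (x + y) := by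
  rw [l1, l1, l1, mul_sum, ← sum_add_distrib]
  gcongr with i
  exact two_mul_abs_mul_add_abs_sub_le_abs_add (hx i) (hy i)

theorem div_add_le_sub_div_of_add_le {a d s : ℝ} (ha : 0 ≤ a) (hd : 0 ≤ d) (h : a + d ≤ s) :
    a / (a + d) ≤ (s - d) / s := by
  rcases (add_nonneg ha hd).eq_or_lt with h₀ | h₀
  · rw [← h₀, div_zero]
    exact div_nonneg (by linarith) (by linarith)
  · rw [div_le_div_iff₀ h₀ (by linarith)]
    nlinarith [mul_nonneg hd (sub_nonneg.2 h)]

theorem dml1_le_dml2_general {p : ℕ} (x y : Fin p → ℝ)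
    (hx : ∀ i, 0 ≤ x i ∧ x i ≤ 1) (hy : ∀ i, 0 ≤ y i ∧ y i ≤ 1) :
    DML1 x y ≤ DML2 x y := by
  rw [DML1, DML2, sub_le_sub_iff_left]
  exact div_add_le_sub_div_of_add_le (mul_nonneg zero_le_two (l1_nonneg _)) (l1_nonneg _)
    (two_mul_l1_mul_add_l1_sub_le_l1_add hx hy)

/-- Theorem 3: the first Dice semimetric loss never exceeds the second. -/
theorem dml1_le_dml2 {p : ℕ} (hp : 1 ≤ p) (x y : Fin p → ℝ)
    (hx : ∀ i, 0 ≤ x i ∧ x i ≤ 1) (hy : ∀ i, 0 ≤ y i ∧ y i ≤ 1)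
    (hxy0 : x + y ≠ 0) :
    DML1 x y ≤ DML2 x y :=
  dml1_le_dml2_general x y hx hy
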